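/- For a positive definite matrix J and matrix H, the matrix J^{-1} − H(H'JH)^† H' equals J^{-1/2} Q_{J^{1/2}H} J^{-1/2} and is positive semidefinite, where Q_A = I − P_A is the orthogonal projection onto the orthogonal complement of span(A). -/

import Mathlib

/-!
With `S = J^{1/2}` and `B = S H`, the Gram matrix `Bᵀ B = Hᵀ J H` has Moore–Penrose inverse `G`,
which is symmetric because the Moore–Penrose inverse is unique and `Gᵀ` is one as well. Hence
`P = B G Bᵀ` is a symmetric idempotent, so `1 - P = (1 - P)ᵀ (1 - P)` is positive semidefinite,
and so is its congruence `S⁻¹ (1 - P) S⁻¹ = J⁻¹ - H G Hᵀ`.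
-/

open Matrix

open scoped ComplexOrder in
/-- The square root of a positive semidefinite matrix, as defined in Mathlib (Dec 2024)
(`Matrix.PosSemidef.sqrt`, since removed from Mathlib). -/
noncomputable def Matrix.PosSemidef.sqrt {n : Type*} [Fintype n] [DecidableEq n]
    {𝕜 : Type*} [RCLike 𝕜] {A : Matrix n n 𝕜} (hA : A.PosSemidef) : Matrix n n 𝕜 :=
  hA.1.eigenvectorUnitary.1 * diagonal ((↑) ∘ (√·) ∘ hA.1.eigenvalues) *
  (star hA.1.eigenvectorUnitary : Matrix n n 𝕜)

/-- G is the Moore–Penrose inverse of A (the four Penrose conditions). -/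
def IsMoorePenrose {m n : ℕ} (A : Matrix (Fin m) (Fin n) ℝ)
    (G : Matrix (Fin n) (Fin m) ℝ) : Prop :=
  A * G * A = A ∧ G * A * G = G ∧ (A * G)ᵀ = A * G ∧ (G * A)ᵀ = G * A

namespace Matrix.PosSemidef

variable {n : Type*} [Fintype n] [DecidableEq n] {𝕜 : Type*} [RCLike 𝕜] {A : Matrix n n 𝕜}

open scoped ComplexOrder

lemma sqrt_eq_cfc (hA : A.PosSemidef) : hA.sqrt = cfc Real.sqrt A := by
  rw [hA.1.cfc_eq, IsHermitian.cfc, Unitary.conjStarAlgAut_apply, sqrt]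

lemma sqrt_mul_self (hA : A.PosSemidef) : hA.sqrt * hA.sqrt = A := by
  have hspec : ∀ x ∈ spectrum ℝ A, 0 ≤ x := by
    rw [hA.1.spectrum_real_eq_range_eigenvalues]
    rintro - ⟨i, rfl⟩
    exact hA.eigenvalues_nonneg i
  rw [sqrt_eq_cfc, ← cfc_mul Real.sqrt Real.sqrt A]
  exact (cfc_congr fun x hx => Real.mul_self_sqrt (hspec x hx)).trans (cfc_id ℝ A hA.1)

lemma isHermitian_sqrt (hA : A.PosSemidef) : hA.sqrt.IsHermitian := by
  rw [sqrt_eq_cfc]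
  exact cfc_predicate _ _

end Matrix.PosSemidef

lemma Matrix.posSemidef_one_sub_of_isSymm_of_isIdempotentElem {ι : Type*} [Fintype ι]
    [DecidableEq ι] {P : Matrix ι ι ℝ} (hsymm : P.IsSymm) (hidem : IsIdempotentElem P) :
    (1 - P).PosSemidef := by
  have hfac : 1 - P = (1 - P)ᴴ * (1 - P) := by
    rw [conjTranspose_eq_transpose_of_trivial, transpose_sub, transpose_one, hsymm.eq,
      Matrix.sub_mul, Matrix.one_mul, Matrix.mul_sub, Matrix.mul_one, hidem.eq, sub_self, sub_zero]
  rw [hfac]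
  exact posSemidef_conjTranspose_mul_self _

namespace IsMoorePenrose

lemma transpose {m n : ℕ} {A : Matrix (Fin m) (Fin n) ℝ} {G : Matrix (Fin n) (Fin m) ℝ}
    (hG : IsMoorePenrose A G) : IsMoorePenrose Aᵀ Gᵀ := by
  obtain ⟨hAGA, hGAG, hAG, hGA⟩ := hG
  refine ⟨?_, ?_, ?_, ?_⟩
  · rw [← transpose_mul, ← transpose_mul, ← Matrix.mul_assoc, hAGA]
  · rw [← transpose_mul, ← transpose_mul, ← Matrix.mul_assoc, hGAG]
  · rw [← transpose_mul, hGA]; exact hGA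
  · rw [← transpose_mul, hAG]; exact hAG

lemma unique {m n : ℕ} {A : Matrix (Fin m) (Fin n) ℝ} {G₁ G₂ : Matrix (Fin n) (Fin m) ℝ}
    (h₁ : IsMoorePenrose A G₁) (h₂ : IsMoorePenrose A G₂) : G₁ = G₂ := by
  obtain ⟨hAGA₁, hGAG₁, hAG₁, hGA₁⟩ := h₁
  obtain ⟨hAGA₂, hGAG₂, hAG₂, hGA₂⟩ := h₂
  have hAG : A * G₁ = A * G₂ :=
    calc A * G₁ = (A * G₂) * (A * G₁) := by rw [← Matrix.mul_assoc, hAGA₂]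
      _ = ((A * G₁) * (A * G₂))ᵀ := by rw [transpose_mul, hAG₁, hAG₂]
      _ = A * G₂ := by rw [← Matrix.mul_assoc, hAGA₁, hAG₂]
  have hGA : G₁ * A = G₂ * A :=
    calc G₁ * A = (G₁ * A) * (G₂ * A) := by rw [Matrix.mul_assoc, ← Matrix.mul_assoc A, hAGA₂]
      _ = ((G₂ * A) * (G₁ * A))ᵀ := by rw [transpose_mul, hGA₁, hGA₂]
      _ = G₂ * A := by rw [Matrix.mul_assoc, ← Matrix.mul_assoc A, hAGA₁, hGA₂]
  calc G₁ = G₁ * A * G₁ := hGAG₁.symm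
    _ = G₂ * A * G₂ := by rw [Matrix.mul_assoc, hAG, ← Matrix.mul_assoc, hGA]
    _ = G₂ := hGAG₂

lemma isSymm {n : ℕ} {A G : Matrix (Fin n) (Fin n) ℝ} (hA : A.IsSymm)
    (hG : IsMoorePenrose A G) : G.IsSymm := by
  have hGt := hG.transpose
  rw [hA.eq] at hGt
  exact unique hGt hG

variable {n k : ℕ} {B : Matrix (Fin n) (Fin k) ℝ} {G : Matrix (Fin k) (Fin k) ℝ}

lemma isIdempotentElem_mul_mul_transpose (hG : IsMoorePenrose (Bᵀ * B) G) :
    IsIdempotentElem (B * G * Bᵀ) := by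
  calc B * G * Bᵀ * (B * G * Bᵀ) = B * (G * (Bᵀ * B) * G) * Bᵀ := by
        simp only [Matrix.mul_assoc]
    _ = B * G * Bᵀ := by rw [hG.2.1]

lemma posSemidef_one_sub_mul_mul_transpose (hG : IsMoorePenrose (Bᵀ * B) G) :
    (1 - B * G * Bᵀ).PosSemidef := by
  refine posSemidef_one_sub_of_isSymm_of_isIdempotentElem ?_ hG.isIdempotentElem_mul_mul_transpose
  have hGsymm : G.IsSymm := hG.isSymm (by rw [IsSymm, transpose_mul, transpose_transpose])
  rw [IsSymm, transpose_mul, transpose_mul, transpose_transpose, hGsymm.eq, Matrix.mul_assoc]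

end IsMoorePenrose

/-- For positive definite J and matrix H, J⁻¹ − H(H'JH)⁺H' equals
J^{-1/2} Q_{J^{1/2}H} J^{-1/2} (where Q_A = I − P_A and
P_{J^{1/2}H} = J^{1/2}H(H'JH)⁺H'J^{1/2}) and is positive semidefinite. -/
theorem stmt_12 {n k : ℕ} (J : Matrix (Fin n) (Fin n) ℝ) (hJ : J.PosDef)
    (H : Matrix (Fin n) (Fin k) ℝ) (G : Matrix (Fin k) (Fin k) ℝ)
    (hG : IsMoorePenrose (Hᵀ * J * H) G) :
    J⁻¹ - H * G * Hᵀ =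
      (hJ.posSemidef.sqrt)⁻¹ *
        (1 - hJ.posSemidef.sqrt * H * G * Hᵀ * hJ.posSemidef.sqrt) *
        (hJ.posSemidef.sqrt)⁻¹ ∧
    (J⁻¹ - H * G * Hᵀ).PosSemidef := by
  set S := hJ.posSemidef.sqrt
  have hSS : S * S = J := hJ.posSemidef.sqrt_mul_self
  have hSsymm : Sᵀ = S := hJ.posSemidef.isHermitian_sqrt
  have hSdet : IsUnit S.det := by
    have hJdet : IsUnit J.det := (isUnit_iff_isUnit_det J).mp hJ.isUnit
    rw [← hSS, det_mul, IsUnit.mul_iff] at hJdet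
    exact hJdet.1
  have hgram : (S * H)ᵀ * (S * H) = Hᵀ * J * H := by
    rw [transpose_mul, hSsymm, ← hSS]; simp only [Matrix.mul_assoc]
  have hQ : (1 - S * H * G * Hᵀ * S).PosSemidef := by
    rw [← hgram] at hG
    simpa only [transpose_mul, hSsymm, Matrix.mul_assoc]
      using hG.posSemidef_one_sub_mul_mul_transpose
  have heq : J⁻¹ - H * G * Hᵀ = S⁻¹ * (1 - S * H * G * Hᵀ * S) * S⁻¹ := by
    rw [← hSS, Matrix.mul_inv_rev, Matrix.mul_sub, Matrix.sub_mul, Matrix.mul_one]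
    simp only [Matrix.mul_assoc, nonsing_inv_mul_cancel_left S _ hSdet, mul_nonsing_inv S hSdet,
      Matrix.mul_one]
  refine ⟨heq, heq ▸ ?_⟩
  have hSinv : (S⁻¹)ᴴ = S⁻¹ := by
    rw [conjTranspose_eq_transpose_of_trivial, transpose_nonsing_inv, hSsymm]
  simpa only [hSinv] using hQ.mul_mul_conjTranspose_same S⁻¹
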